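/- arXiv:1605.07484 — 5 statements merged into one kernel-verified Lean document; each statement's English description precedes it below -/
import Mathlib

section
/- Let w ∈ H^1(ℝ^3) be radially symmetric, continuous, nonnegative, and satisfy −Δw + q(x) w = 0 in ℝ^3 where q(x) ≥ |λ|/2 > 0 for |x| > M. Then there exist α > 0 and γ ∈ (0, |λ|/2) such that w(x) ≤ α e^{−√(1 + γ|x|^2)} for every x ∈ ℝ^3. -/
open MeasureTheory Real Filter

noncomputable section

abbrev E3 := EuclideanSpace ℝ (Fin 3)

/-- The Laplacian of `w : ℝ³ → ℝ`, as the sum of the pure second derivatives. -/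
def lap (w : E3 → ℝ) (x : E3) : ℝ :=
  ∑ i : Fin 3,
    fderiv ℝ (fun y => fderiv ℝ w y (EuclideanSpace.single i 1)) x (EuclideanSpace.single i 1)

/-!
On a ray the equation reads `f'' + 2 f' / r = q f ≥ k² f` for the radial profile `f`, with
`k² = |λ| / 2`, so `g = r f` satisfies `g'' ≥ k² g` for large `r`. Then `(g' + k g) e^{-kr}` is
nondecreasing; if it ever became positive, `g` would grow like `e^{kr}`, which `w ∈ L²` forbids
since it forces `f < 1` at arbitrarily large radii. Hence `g' + k g ≤ 0`, i.e. `g e^{kr}` is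
nonincreasing, so `w(x) ≤ C e^{-k|x|}`, and `k |x| ≥ √(1 + γ |x|²) - 1` for `γ = |λ| / 4`.
-/

open Set
open scoped ENNReal

theorem MeasureTheory.MemLp.frequently_norm_lt_cocompact {G F : Type*} [TopologicalSpace G]
    [AddGroup G] [IsTopologicalAddGroup G] [WeaklyLocallyCompactSpace G] [NoncompactSpace G]
    [MeasurableSpace G] [BorelSpace G] [NormedAddCommGroup F] {μ : Measure G} [μ.IsAddHaarMeasure]
    {f : G → F} {p : ℝ≥0∞} (hf : MemLp f p μ) (hp0 : p ≠ 0) (hp : p ≠ ∞) {ε : ℝ} (hε : 0 < ε) :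
    ∃ᶠ x in cocompact G, ‖f x‖ < ε := by
  intro h
  obtain ⟨K, hK, hKc⟩ := mem_cocompact.1 h
  have hcompl : μ Kᶜ < ∞ := by
    refine (measure_mono fun x hx => ?_).trans_lt
      (hf.meas_ge_lt_top hp0 hp (Real.toNNReal_pos.2 hε).ne')
    simpa [Real.toNNReal_le_iff_le_coe] using hKc hx
  have := (measure_univ_le_add_compl K (μ := μ)).trans_lt
    (ENNReal.add_lt_top.2 ⟨hK.measure_lt_top, hcompl⟩)
  simp at this

lemma monotoneOn_Ici_of_hasDerivAt {f f' : ℝ → ℝ} {a : ℝ} (hf : ∀ x, HasDerivAt f (f' x) x)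
    (hf' : ∀ x, a < x → 0 ≤ f' x) : MonotoneOn f (Ici a) :=
  monotoneOn_of_hasDerivWithinAt_nonneg (convex_Ici a)
    (fun x _ => (hf x).continuousAt.continuousWithinAt) (fun x _ => (hf x).hasDerivWithinAt)
    (by simpa using hf')

lemma antitoneOn_Ici_of_hasDerivAt {f f' : ℝ → ℝ} {a : ℝ} (hf : ∀ x, HasDerivAt f (f' x) x)
    (hf' : ∀ x, a < x → f' x ≤ 0) : AntitoneOn f (Ici a) :=
  antitoneOn_of_hasDerivWithinAt_nonpos (convex_Ici a)
    (fun x _ => (hf x).continuousAt.continuousWithinAt) (fun x _ => (hf x).hasDerivWithinAt)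
    (by simpa using hf')

section ExpComparison

variable {g g' g'' : ℝ → ℝ} {k a : ℝ}

lemma hasDerivAt_mul_exp (hg : ∀ r, HasDerivAt g (g' r) r) (k r : ℝ) :
    HasDerivAt (fun r => g r * exp (k * r)) ((g' r + k * g r) * exp (k * r)) r :=
  ((hg r).mul ((hasDerivAt_id r).const_mul k).exp).congr_deriv (by simp only [id]; ring)

lemma monotoneOn_deriv_add_mul_mul_exp (hg : ∀ r, HasDerivAt g (g' r) r)
    (hg' : ∀ r, HasDerivAt g' (g'' r) r) (hode : ∀ r, a < r → k ^ 2 * g r ≤ g'' r) :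
    MonotoneOn (fun r => (g' r + k * g r) * exp (-k * r)) (Ici a) := by
  refine monotoneOn_Ici_of_hasDerivAt
    (hasDerivAt_mul_exp (fun r => (hg' r).add ((hg r).const_mul k)) (-k)) fun r hr => ?_
  have := hode r hr
  have : 0 ≤ g'' r + k * g' r + -k * (g' r + k * g r) := by nlinarith
  positivity

lemma monotoneOn_mul_exp_sub_of_le (hk : 0 < k) (hg : ∀ r, HasDerivAt g (g' r) r) {c : ℝ}
    (hc : ∀ r, a < r → c ≤ (g' r + k * g r) * exp (-k * r)) :
    MonotoneOn (fun r => g r * exp (k * r) - c / (2 * k) * exp (2 * k * r)) (Ici a) := by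
  refine monotoneOn_Ici_of_hasDerivAt (fun r => (hasDerivAt_mul_exp hg k r).sub
    (((hasDerivAt_id r).const_mul (2 * k)).exp.const_mul (c / (2 * k)))) fun r hr => ?_
  have he : exp (-k * r) * exp (2 * k * r) = exp (k * r) := by rw [← exp_add]; ring_nf
  have h : c * exp (2 * k * r) ≤ (g' r + k * g r) * exp (k * r) :=
    calc c * exp (2 * k * r) ≤ (g' r + k * g r) * exp (-k * r) * exp (2 * k * r) :=
          mul_le_mul_of_nonneg_right (hc r hr) (exp_pos _).le
      _ = (g' r + k * g r) * exp (k * r) := by rw [mul_assoc, he]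
  have hc2 : c / (2 * k) * (exp (2 * k * r) * (2 * k)) = c * exp (2 * k * r) := by field_simp
  simp only [id, mul_one, hc2]
  linarith

theorem antitoneOn_mul_exp_of_le_deriv2 (hk : 0 < k) (hg : ∀ r, HasDerivAt g (g' r) r)
    (hg' : ∀ r, HasDerivAt g' (g'' r) r) (hode : ∀ r, a < r → k ^ 2 * g r ≤ g'' r)
    (hsmall : ∀ c > 0, ∃ᶠ r in atTop, g r < c * exp (k * r)) :
    AntitoneOn (fun r => g r * exp (k * r)) (Ici a) := by
  have hQ : ∀ r, a ≤ r → (g' r + k * g r) * exp (-k * r) ≤ 0 := by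
    intro r₁ hr₁
    by_contra! hc
    set c := (g' r₁ + k * g r₁) * exp (-k * r₁)
    set H := fun r => g r * exp (k * r) - c / (2 * k) * exp (2 * k * r)
    have hH : MonotoneOn H (Ici r₁) := monotoneOn_mul_exp_sub_of_le hk hg fun r hr =>
      monotoneOn_deriv_add_mul_mul_exp hg hg' hode hr₁ (hr₁.trans hr.le) hr.le
    have hlarge : ∀ᶠ r in atTop, -H r₁ ≤ c / (4 * k) * exp (2 * k * r) :=
      ((tendsto_exp_atTop.comp (tendsto_id.const_mul_atTop (by positivity))).const_mul_atTop
        (by positivity)).eventually_ge_atTop _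
    obtain ⟨r, hr_small, hr_large, hr₁r⟩ :=
      ((hsmall (c / (4 * k)) (by positivity)).and_eventually
        (hlarge.and (eventually_ge_atTop r₁))).exists
    have hHr := hH self_mem_Ici hr₁r hr₁r
    have hexp : exp (2 * k * r) = exp (k * r) * exp (k * r) := by rw [← exp_add]; ring_nf
    have := mul_lt_mul_of_pos_right hr_small (exp_pos (k * r))
    have hc2 : c / (2 * k) = 2 * (c / (4 * k)) := by field_simp; ring
    simp only [H, hc2, hexp] at hHr hr_large
    nlinarith
  refine antitoneOn_Ici_of_hasDerivAt (hasDerivAt_mul_exp hg k) fun r hr => ?_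
  exact mul_nonpos_of_nonpos_of_nonneg (nonpos_of_mul_nonpos_left (hQ r hr.le) (exp_pos _))
    (exp_pos _).le

end ExpComparison

lemma hasDerivAt_mul_id_of_continuousAt {u : ℝ → ℝ} (hu : ContinuousAt u 0) :
    HasDerivAt (fun t => u t * t) (u 0) 0 := by
  rw [hasDerivAt_iff_tendsto_slope]
  refine (hu.tendsto.mono_left nhdsWithin_le_nhds).congr' ?_
  filter_upwards [self_mem_nhdsWithin] with t (ht : t ≠ 0)
  simp [slope_def_field, ht]

section SecondDirectionalDerivative

variable {E : Type*} [NormedAddCommGroup E] [NormedSpace ℝ E] {w : E → ℝ}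

lemma hasDerivAt_comp_add_smul (hw : Differentiable ℝ w) (x v : E) (t : ℝ) :
    HasDerivAt (fun s : ℝ => w (x + s • v)) (fderiv ℝ w (x + t • v) v) t :=
  (hw _).hasFDerivAt.comp_hasDerivAt t (((hasDerivAt_id t).smul_const v).const_add x |>.congr_deriv
    (one_smul ℝ v))

lemma fderiv_fderiv_apply_eq_of_hasDerivAt (hw : ContDiff ℝ 2 w) {x v : E} {ψ : ℝ → ℝ} {L : ℝ}
    (hψ : ∀ t, HasDerivAt (fun s : ℝ => w (x + s • v)) (ψ t) t) (hL : HasDerivAt ψ L 0) :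
    fderiv ℝ (fun y => fderiv ℝ w y v) x v = L := by
  have hw1 := hw.differentiable (by norm_num)
  obtain rfl : ψ = fun t => fderiv ℝ w (x + t • v) v :=
    funext fun t => (hψ t).unique (hasDerivAt_comp_add_smul hw1 x v t)
  have hd : Differentiable ℝ fun y => fderiv ℝ w y v :=
    ((hw.fderiv_right (m := 1) (by norm_num)).clm_apply contDiff_const).differentiable one_ne_zero
  refine HasDerivAt.unique ?_ hL
  simpa using hasDerivAt_comp_add_smul hd x v 0

end SecondDirectionalDerivative

section Radial

variable {E : Type*} [NormedAddCommGroup E] [InnerProductSpace ℝ E] {w : E → ℝ} {u v : E}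

lemma contDiff_comp_smul (hw : ContDiff ℝ 2 w) (u : E) : ContDiff ℝ 2 fun s : ℝ => w (s • u) :=
  hw.comp (contDiff_id.smul contDiff_const)

lemma eq_comp_norm_smul_of_radial (hrad : ∀ x y : E, ‖x‖ = ‖y‖ → w x = w y) (hu : ‖u‖ = 1)
    (x : E) : w x = w (‖x‖ • u) :=
  hrad _ _ (by simp [norm_smul, hu])

lemma fderiv_fderiv_apply_smul_self (hw : ContDiff ℝ 2 w) (u : E) (r : ℝ) :
    fderiv ℝ (fun y => fderiv ℝ w y u) (r • u) u = deriv (deriv fun s => w (s • u)) r := by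
  set f := fun s : ℝ => w (s • u)
  have hf := contDiff_comp_smul hw u
  refine fderiv_fderiv_apply_eq_of_hasDerivAt hw (ψ := fun t => deriv f (r + t)) (fun t => ?_) ?_
  · have : (fun s : ℝ => w (r • u + s • u)) = fun s => f (r + s) := by
      funext s; simp only [f, add_smul]
    rw [this]
    exact (hf.differentiable (by norm_num) _).hasDerivAt.comp_const_add r t
  · simpa using (hf.differentiable_deriv_two (r + 0)).hasDerivAt.comp_const_add r 0

lemma fderiv_fderiv_apply_of_inner_eq_zero (hw : ContDiff ℝ 2 w)
    (hrad : ∀ x y : E, ‖x‖ = ‖y‖ → w x = w y) (hu : ‖u‖ = 1) (hv : ‖v‖ = 1)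
    (huv : inner ℝ u v = 0) {r : ℝ} (hr : 0 < r) :
    fderiv ℝ (fun y => fderiv ℝ w y v) (r • u) v = deriv (fun s => w (s • u)) r / r := by
  set f := fun s : ℝ => w (s • u)
  have hf := contDiff_comp_smul hw u
  set ρ := fun t : ℝ => √(r ^ 2 + t ^ 2)
  have hρ_pos : ∀ t, 0 < ρ t := fun t => Real.sqrt_pos.2 (by positivity)
  have hρ : ∀ t, HasDerivAt ρ (t / ρ t) t := fun t =>
    (((hasDerivAt_pow 2 t).const_add (r ^ 2)).sqrt (by positivity)).congr_deriv
      (by simp only [ρ]; field_simp; ring)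
  have hnorm : ∀ s : ℝ, ‖r • u + s • v‖ = ρ s := by
    intro s
    rw [← Real.sqrt_sq (norm_nonneg _), norm_add_sq_real]
    simp [ρ, norm_smul, inner_smul_left, inner_smul_right, huv, hu, hv]
  have hline : (fun s : ℝ => w (r • u + s • v)) = fun s => f (ρ s) := by
    funext s
    rw [eq_comp_norm_smul_of_radial hrad hu, hnorm]
  have hu0 : ContinuousAt (fun t => deriv f (ρ t) / ρ t) 0 :=
    ((hf.continuous_deriv (by norm_num)).continuousAt.comp (hρ 0).continuousAt).div
      (hρ 0).continuousAt (hρ_pos 0).ne'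
  have hρ0 : ρ 0 = r := by simp [ρ, Real.sqrt_sq hr.le]
  -- `ψ t = f'(ρ t) · ρ'(t)` with `ρ'(t) = t / ρ t`, so its slope at `0` is `f'(r) / r`.
  refine fderiv_fderiv_apply_eq_of_hasDerivAt hw (ψ := fun t => deriv f (ρ t) / ρ t * t)
    (fun t => ?_) ?_
  · rw [hline]
    exact ((hf.differentiable (by norm_num) _).hasDerivAt.comp t (hρ t)).congr_deriv (by ring)
  · simpa [hρ0] using hasDerivAt_mul_id_of_continuousAt hu0

end Radial

lemma lap_smul_single_zero {w : E3 → ℝ} (hw : ContDiff ℝ 2 w)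
    (hrad : ∀ x y : E3, ‖x‖ = ‖y‖ → w x = w y) {r : ℝ} (hr : 0 < r) :
    lap w (r • EuclideanSpace.single 0 1) =
      deriv (deriv fun s => w (s • EuclideanSpace.single 0 1)) r
        + 2 * (deriv (fun s => w (s • EuclideanSpace.single 0 1)) r / r) := by
  have hon := EuclideanSpace.orthonormal_single (𝕜 := ℝ) (ι := Fin 3)
  have hcross : ∀ i : Fin 3, i ≠ 0 →
      fderiv ℝ (fun y => fderiv ℝ w y (EuclideanSpace.single i 1)) (r • EuclideanSpace.single 0 1)
        (EuclideanSpace.single i 1) = deriv (fun s => w (s • EuclideanSpace.single 0 1)) r / r :=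
    fun i hi => fderiv_fderiv_apply_of_inner_eq_zero hw hrad (hon.1 0) (hon.1 i) (hon.2 hi.symm) hr
  rw [lap, Fin.sum_univ_three, fderiv_fderiv_apply_smul_self hw, hcross 1 (by decide),
    hcross 2 (by decide)]
  ring

theorem le_mul_exp_neg_of_radial_ode {f : ℝ → ℝ} {k a : ℝ} (hf : ContDiff ℝ 2 f) (hk : 0 < k)
    (ha : 0 < a) (hfa : 0 ≤ f a)
    (hode : ∀ r, a < r → k ^ 2 * f r ≤ deriv (deriv f) r + 2 * (deriv f r / r))
    (hsmall : ∃ᶠ r in atTop, f r < 1) :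
    ∀ r, a ≤ r → f r ≤ f a * exp (k * a) * exp (-(k * r)) := by
  have hf1 := hf.differentiable (by norm_num)
  have hg : ∀ r, HasDerivAt (fun r => r * f r) (f r + r * deriv f r) r := fun r =>
    ((hasDerivAt_id r).mul (hf1 r).hasDerivAt).congr_deriv (by simp)
  have hg' : ∀ r, HasDerivAt (fun r => f r + r * deriv f r)
      (2 * deriv f r + r * deriv (deriv f) r) r := fun r =>
    ((hf1 r).hasDerivAt.add ((hasDerivAt_id r).mul (hf.differentiable_deriv_two r).hasDerivAt))
      |>.congr_deriv (by simp only [id]; ring)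
  have hode' : ∀ r, a < r → k ^ 2 * (r * f r) ≤ 2 * deriv f r + r * deriv (deriv f) r := by
    intro r hr
    have hr0 : 0 < r := ha.trans hr
    calc k ^ 2 * (r * f r) = r * (k ^ 2 * f r) := by ring
      _ ≤ r * (deriv (deriv f) r + 2 * (deriv f r / r)) :=
          mul_le_mul_of_nonneg_left (hode r hr) hr0.le
      _ = 2 * deriv f r + r * deriv (deriv f) r := by field_simp; ring
  have hsmall' : ∀ c > 0, ∃ᶠ r in atTop, r * f r < c * exp (k * r) := by
    intro c hc
    have hlin : ∀ᶠ r in atTop, r ≤ c * exp (k * r) := by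
      filter_upwards [(isLittleO_pow_exp_pos_mul_atTop 1 hk).bound hc, eventually_ge_atTop 0]
        with r hr hr0
      simpa [abs_of_nonneg hr0] using hr
    refine (hsmall.and_eventually (hlin.and (eventually_gt_atTop 0))).mono ?_
    rintro r ⟨hfr, hlin, hr0⟩
    nlinarith
  have hanti := antitoneOn_mul_exp_of_le_deriv2 hk hg hg' hode' hsmall'
  intro r hr
  have hr0 : 0 < r := ha.trans_le hr
  refine le_of_mul_le_mul_left ?_ hr0
  calc r * f r = r * f r * exp (k * r) * exp (-(k * r)) := by
        rw [mul_assoc, ← exp_add, add_neg_cancel, exp_zero, mul_one]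
    _ ≤ a * f a * exp (k * a) * exp (-(k * r)) :=
        mul_le_mul_of_nonneg_right (hanti self_mem_Ici hr hr) (exp_pos _).le
    _ = a * (f a * exp (k * a) * exp (-(k * r))) := by ring
    _ ≤ r * (f a * exp (k * a) * exp (-(k * r))) :=
        mul_le_mul_of_nonneg_right hr (mul_nonneg (mul_nonneg hfa (exp_pos _).le) (exp_pos _).le)

lemma exists_pos_le_mul_exp_neg {f : ℝ → ℝ} {a k B : ℝ} (hf : ContinuousOn f (Icc 0 a))
    (hk : 0 ≤ k) (hB : ∀ r, a ≤ r → f r ≤ B * exp (-(k * r))) :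
    ∃ C > 0, ∀ r, 0 ≤ r → f r ≤ C * exp (-(k * r)) := by
  obtain ⟨S, hS⟩ := isCompact_Icc.bddAbove_image hf
  refine ⟨max (max B (max S 0 * exp (k * a))) 1, by positivity, fun r hr => ?_⟩
  rcases le_total r a with hra | har
  · have hfS : f r ≤ max S 0 := (hS (mem_image_of_mem f ⟨hr, hra⟩)).trans (le_max_left _ _)
    have hexp : 1 ≤ exp (k * a) * exp (-(k * r)) := by
      rw [← exp_add]
      exact one_le_exp (by nlinarith)
    calc f r ≤ max S 0 * (exp (k * a) * exp (-(k * r))) :=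
          hfS.trans (le_mul_of_one_le_right (le_max_right _ _) hexp)
      _ = max S 0 * exp (k * a) * exp (-(k * r)) := by ring
      _ ≤ _ := by gcongr; exact (le_max_right _ _).trans (le_max_left _ _)
  · exact (hB r har).trans (by gcongr; exact (le_max_left _ _).trans (le_max_left _ _))

lemma exp_neg_mul_le_exp_one_mul_exp_neg_sqrt {k γ r : ℝ} (hk : 0 ≤ k) (hγ : γ ≤ k ^ 2)
    (hr : 0 ≤ r) : exp (-(k * r)) ≤ exp 1 * exp (-√(1 + γ * r ^ 2)) := by
  have hsqrt : √(1 + γ * r ^ 2) ≤ 1 + k * r :=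
    Real.sqrt_le_iff.2 ⟨by positivity, by nlinarith [mul_nonneg hk hr, sq_nonneg r]⟩
  rw [← exp_add]
  exact exp_le_exp.2 (by linarith)

theorem stmt5_general (w q : E3 → ℝ) (lam M : ℝ) (hlam : lam ≠ 0)
    (hw_smooth : ContDiff ℝ 2 w)
    (hw_rad : ∀ x y : E3, ‖x‖ = ‖y‖ → w x = w y)
    (hw_nonneg : ∀ x, 0 ≤ w x)
    (hwL2 : MemLp w 2 volume)
    (hq : ∀ x : E3, M < ‖x‖ → |lam| / 2 ≤ q x)
    (heq : ∀ x : E3, -lap w x + q x * w x = 0) :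
    ∃ α : ℝ, 0 < α ∧ ∃ γ : ℝ, 0 < γ ∧ γ < |lam| / 2 ∧
      ∀ x : E3, w x ≤ α * Real.exp (-Real.sqrt (1 + γ * ‖x‖ ^ 2)) := by
  set e₀ : E3 := EuclideanSpace.single 0 1
  set f := fun s : ℝ => w (s • e₀)
  set k := √(|lam| / 2)
  have hlam' : 0 < |lam| := abs_pos.2 hlam
  have hk2 : k ^ 2 = |lam| / 2 := Real.sq_sqrt (by positivity)
  have hf : ContDiff ℝ 2 f := contDiff_comp_smul hw_smooth e₀
  have hwf : ∀ x, w x = f ‖x‖ := eq_comp_norm_smul_of_radial hw_rad (by simp [e₀])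
  have hode : ∀ r, max M 0 + 1 < r → k ^ 2 * f r ≤ deriv (deriv f) r + 2 * (deriv f r / r) := by
    intro r hr
    have hr0 : 0 < r := by linarith [le_max_right M 0]
    have hqr := hq (r • e₀) (by simp [e₀, norm_smul, abs_of_pos hr0]; linarith [le_max_left M 0])
    rw [← lap_smul_single_zero hw_smooth hw_rad hr0, hk2]
    nlinarith [heq (r • e₀), hw_nonneg (r • e₀)]
  have hsmall : ∃ᶠ r in atTop, f r < 1 :=
    tendsto_norm_cocompact_atTop.frequently <|
      (hwL2.frequently_norm_lt_cocompact two_ne_zero ENNReal.ofNat_ne_top one_pos).mono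
        fun x hx => by simpa [← hwf] using (le_abs_self (w x)).trans_lt hx
  obtain ⟨C, hC, hbound⟩ := exists_pos_le_mul_exp_neg hf.continuous.continuousOn
    (Real.sqrt_nonneg _) (le_mul_exp_neg_of_radial_ode hf (Real.sqrt_pos.2 (by positivity))
      (by positivity) (hw_nonneg _) hode hsmall)
  refine ⟨C * exp 1, by positivity, |lam| / 4, by positivity, by linarith, fun x => ?_⟩
  calc w x = f ‖x‖ := hwf x
    _ ≤ C * (exp 1 * exp (-√(1 + |lam| / 4 * ‖x‖ ^ 2))) :=
        (hbound _ (norm_nonneg x)).trans (mul_le_mul_of_nonneg_left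
          (exp_neg_mul_le_exp_one_mul_exp_neg_sqrt (Real.sqrt_nonneg _) (by linarith)
            (norm_nonneg x)) hC.le)
    _ = C * exp 1 * exp (-√(1 + |lam| / 4 * ‖x‖ ^ 2)) := by ring

/-- Exponential decay of a nonnegative radial `H¹` solution of `−Δw + q w = 0`
with `q ≥ |λ|/2 > 0` outside a ball. -/
theorem stmt5 (w q : E3 → ℝ) (lam M : ℝ) (hlam : lam ≠ 0)
    (hw_smooth : ContDiff ℝ 2 w) (hw_cont : Continuous w)
    (hw_rad : ∀ x y : E3, ‖x‖ = ‖y‖ → w x = w y)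
    (hw_nonneg : ∀ x, 0 ≤ w x)
    (hwL2 : MemLp w 2 volume)
    (hwgrad : MemLp (fun x => ‖fderiv ℝ w x‖) 2 volume)
    (hq : ∀ x : E3, M < ‖x‖ → |lam| / 2 ≤ q x)
    (heq : ∀ x : E3, -lap w x + q x * w x = 0) :
    ∃ α : ℝ, 0 < α ∧ ∃ γ : ℝ, 0 < γ ∧ γ < |lam| / 2 ∧
      ∀ x : E3, w x ≤ α * Real.exp (-Real.sqrt (1 + γ * ‖x‖ ^ 2)) :=
  stmt5_general w q lam M hlam hw_smooth hw_rad hw_nonneg hwL2 hq heq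
end
end

section
/- Let γ ∈ ℝ with 0 < γ. Then the function z(x) = e^{−√(1 + γ|x|^2)} satisfies −Δz + γ z ≥ 0 pointwise in ℝ^3. -/
/-!
For a radial function `w(y) = g(‖y‖²)` on `ℝⁿ` one has `Δw(x) = 4‖x‖² g''(‖x‖²) + 2n g'(‖x‖²)`.
With `g(s) = e^{-√(1 + γs)}` and `u = √(1 + γ‖x‖²)`, so that `γ‖x‖² = u² - 1`, this gives
`-Δz + γz = γ e^{-u} (2u² + u + 1) / u³ > 0`.
-/

open MeasureTheory Real Filter

noncomputable section

open scoped RealInnerProductSpace Topology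

section RadialFunction

variable {F : Type*} [NormedAddCommGroup F] [InnerProductSpace ℝ F] {g g' : ℝ → ℝ}

theorem hasFDerivAt_comp_norm_sq {y : F} (hg : HasDerivAt g (g' (‖y‖ ^ 2)) (‖y‖ ^ 2)) :
    HasFDerivAt (fun y => g (‖y‖ ^ 2)) (g' (‖y‖ ^ 2) • 2 • innerSL ℝ y) y :=
  hg.comp_hasFDerivAt y (hasStrictFDerivAt_norm_sq y).hasFDerivAt

theorem fderiv_comp_norm_sq_apply {y : F} (hg : HasDerivAt g (g' (‖y‖ ^ 2)) (‖y‖ ^ 2)) (v : F) :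
    fderiv ℝ (fun y => g (‖y‖ ^ 2)) y v = g' (‖y‖ ^ 2) * (2 * ⟪y, v⟫) := by
  simp [(hasFDerivAt_comp_norm_sq hg).fderiv]

theorem fderiv_fderiv_comp_norm_sq_apply {x : F} {g'' : ℝ}
    (hg : ∀ᶠ s in 𝓝 (‖x‖ ^ 2), HasDerivAt g (g' s) s) (hg' : HasDerivAt g' g'' (‖x‖ ^ 2))
    (v : F) :
    fderiv ℝ (fun y => fderiv ℝ (fun y => g (‖y‖ ^ 2)) y v) x v
      = 4 * g'' * ⟪x, v⟫ ^ 2 + 2 * g' (‖x‖ ^ 2) * ‖v‖ ^ 2 := by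
  have hnear : (fun y => fderiv ℝ (fun y => g (‖y‖ ^ 2)) y v)
      =ᶠ[𝓝 x] fun y => g' (‖y‖ ^ 2) * (2 * ⟪y, v⟫) :=
    (((by fun_prop : Continuous fun y : F => ‖y‖ ^ 2).tendsto x).eventually hg).mono
      fun y hy => fderiv_comp_norm_sq_apply hy v
  have hinner : HasFDerivAt (fun y => 2 * ⟪y, v⟫) ((2 : ℝ) • innerSL ℝ v) x := by
    simp_rw [real_inner_comm v]
    exact (innerSL ℝ v).hasFDerivAt.const_mul 2
  have hprod : HasFDerivAt (fun y => g' (‖y‖ ^ 2) * (2 * ⟪y, v⟫)) _ x :=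
    (hasFDerivAt_comp_norm_sq (g := g') (g' := fun _ => g'') hg').mul hinner
  rw [hnear.fderiv_eq, hprod.fderiv]
  simp only [add_apply, smul_apply, innerSL_apply_apply,
    real_inner_self_eq_norm_sq, smul_eq_mul, nsmul_eq_mul, Nat.cast_ofNat]
  ring

end RadialFunction

theorem lap_comp_norm_sq {g g' : ℝ → ℝ} {g'' : ℝ} {x : E3}
    (hg : ∀ᶠ s in 𝓝 (‖x‖ ^ 2), HasDerivAt g (g' s) s) (hg' : HasDerivAt g' g'' (‖x‖ ^ 2)) :
    lap (fun y => g (‖y‖ ^ 2)) x = 4 * g'' * ‖x‖ ^ 2 + 6 * g' (‖x‖ ^ 2) := by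
  simp only [lap, fderiv_fderiv_comp_norm_sq_apply hg hg', EuclideanSpace.inner_single_right,
    PiLp.norm_single, EuclideanSpace.real_norm_sq_eq x, Fin.sum_univ_three, RCLike.conj_to_real, one_mul,
    norm_one, one_pow]
  ring

theorem hasDerivAt_exp_neg_div (c t : ℝ) (ht : t ≠ 0) :
    HasDerivAt (fun t => c * exp (-t) / t) (-c * exp (-t) * (t + 1) / t ^ 2) t := by
  have : HasDerivAt (fun t => c * exp (-t) / t)
      ((c * (exp (-t) * -1) * t - c * exp (-t) * 1) / t ^ 2) t :=
    ((hasDerivAt_neg t).exp.const_mul c).div (hasDerivAt_id' t) ht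
  convert this using 1
  ring

theorem hasDerivAt_sqrt_one_add_mul {γ s : ℝ} (hs : 0 < 1 + γ * s) :
    HasDerivAt (fun s => √(1 + γ * s)) (γ / (2 * √(1 + γ * s))) s := by
  have : HasDerivAt (fun s => √(1 + γ * s)) (γ * 1 / (2 * √(1 + γ * s))) s :=
    ((hasDerivAt_id' s).const_mul γ |>.const_add 1).sqrt hs.ne'
  rwa [mul_one] at this

theorem hasDerivAt_exp_neg_sqrt_one_add_mul {γ s : ℝ} (hs : 0 < 1 + γ * s) :
    HasDerivAt (fun s => exp (-√(1 + γ * s)))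
      (-(γ / 2) * exp (-√(1 + γ * s)) / √(1 + γ * s)) s := by
  refine (hasDerivAt_sqrt_one_add_mul hs).fun_neg.exp.congr_deriv ?_
  field_simp

theorem hasDerivAt_exp_neg_sqrt_one_add_mul_div {γ s : ℝ} (hs : 0 < 1 + γ * s) :
    HasDerivAt (fun s => -(γ / 2) * exp (-√(1 + γ * s)) / √(1 + γ * s))
      (γ ^ 2 * exp (-√(1 + γ * s)) * (√(1 + γ * s) + 1) / (4 * √(1 + γ * s) ^ 3)) s := by
  have hu : √(1 + γ * s) ≠ 0 := (Real.sqrt_pos.2 hs).ne'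
  refine ((hasDerivAt_exp_neg_div (-(γ / 2)) _ hu).comp s
    (hasDerivAt_sqrt_one_add_mul hs)).congr_deriv ?_
  field_simp
  ring

/-- For `γ > 0`, the function `z(x) = e^{−√(1 + γ|x|²)}` satisfies `−Δz + γz ≥ 0`
pointwise in `ℝ³`. -/
theorem stmt6 (γ : ℝ) (hγ : 0 < γ) (x : E3) :
    0 ≤ -lap (fun y : E3 => Real.exp (-Real.sqrt (1 + γ * ‖y‖ ^ 2))) x
        + γ * Real.exp (-Real.sqrt (1 + γ * ‖x‖ ^ 2)) := by
  have hx : 0 < 1 + γ * ‖x‖ ^ 2 := by positivity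
  have hnear : ∀ᶠ s in 𝓝 (‖x‖ ^ 2), 0 < 1 + γ * s :=
    (isOpen_lt continuous_const (by fun_prop)).mem_nhds hx
  rw [lap_comp_norm_sq (g := fun s => exp (-√(1 + γ * s)))
    (hnear.mono fun s hs => hasDerivAt_exp_neg_sqrt_one_add_mul hs)
    (hasDerivAt_exp_neg_sqrt_one_add_mul_div hx)]
  set u := √(1 + γ * ‖x‖ ^ 2)
  have hu : 0 < u := Real.sqrt_pos.2 hx
  have hu2 : γ * ‖x‖ ^ 2 = u ^ 2 - 1 := by rw [Real.sq_sqrt hx.le]; ring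
  have hformula : -(4 * (γ ^ 2 * exp (-u) * (u + 1) / (4 * u ^ 3)) * ‖x‖ ^ 2
      + 6 * (-(γ / 2) * exp (-u) / u)) + γ * exp (-u)
      = γ * exp (-u) * (2 * u ^ 2 + u + 1) / u ^ 3 := by
    field_simp
    linear_combination (-2 * (u + 1)) * hu2
  rw [hformula]
  positivity
end
end

section
/- Let N ≥ 2, a > 0, and let f satisfy: f continuous and odd, F(s) = ∫_0^s f, and there exist 2 + 4/N < α ≤ β < 2* with 0 < α F(s) ≤ f(s)s ≤ β F(s) for s ≠ 0. Then for every u ∈ H^1(ℝ^N) with ∫ u^2 = a^2 and ∫ |∇u|^2 = (N/2)∫(f(u)u − 2F(u)), the energy satisfies I(u) := ∫ (½|∇u|^2 − F(u)) ≥ (1/(2β))(α − 2 − 4/N) ∫ |∇u|^2 > 0. In particular I restricted to this constraint set is coercive and bounded below by a positive constant. -/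
open MeasureTheory

/-! On the constraint `∫|∇u|² = (N/2)∫(f(u)u − 2F(u))` the energy becomes
`I(u) = (N/4)∫(f(u)u − (2 + 4/N)F(u)) ≥ (N/4)(α − 2 − 4/N)∫F(u)`, while `f(u)u ≤ βF(u)` turns the
constraint into `∫|∇u|² ≤ (Nβ/2)∫F(u)`. Combining the two gives the lower bound; positivity
follows because `F(u) > 0` wherever `u ≠ 0` and `u` has nonzero mass. -/

section Pohozaev

/- `G`, `A`, `B` stand for `∫|∇u|²`, `∫f(u)u`, `∫F(u)`; the hypothesis `hG` is the constraint and
`1 / 2 * G - B` the energy. -/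
variable {n α β G A B : ℝ}

lemma energy_ge_of_pohozaev (hn : 0 < n) (hG : G = n / 2 * (A - 2 * B)) (hA : α * B ≤ A) :
    n / 4 * (α - 2 - 4 / n) * B ≤ 1 / 2 * G - B := by
  have hI : 1 / 2 * G - B = n / 4 * (A - (2 + 4 / n) * B) := by
    rw [hG]; field_simp; ring
  rw [hI, mul_assoc]
  gcongr
  linarith

lemma gradient_le_of_pohozaev (hn : 0 < n) (hG : G = n / 2 * (A - 2 * B)) (hA : A ≤ β * B)
    (hB : 0 ≤ B) : G ≤ n * β / 2 * B := by
  rw [hG]; nlinarith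

lemma pohozaev_energy_bounds (hn : 0 < n) (hα : 2 + 4 / n < α) (hαβ : α ≤ β)
    (hG : G = n / 2 * (A - 2 * B)) (hαA : α * B ≤ A) (hAβ : A ≤ β * B) (hB : 0 < B) :
    1 / (2 * β) * (α - 2 - 4 / n) * G ≤ 1 / 2 * G - B ∧ 0 < 1 / 2 * G - B := by
  have hc : 0 < α - 2 - 4 / n := by linarith
  have hβ : 0 < β := by linarith [div_pos four_pos hn]
  have hlow := energy_ge_of_pohozaev hn hG hαA
  refine ⟨?_, lt_of_lt_of_le (by positivity) hlow⟩
  calc 1 / (2 * β) * (α - 2 - 4 / n) * G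
      ≤ 1 / (2 * β) * (α - 2 - 4 / n) * (n * β / 2 * B) := by
        gcongr; exact gradient_le_of_pohozaev hn hG hAβ hB.le
    _ = n / 4 * (α - 2 - 4 / n) * B := by field_simp; ring
    _ ≤ 1 / 2 * G - B := hlow

end Pohozaev

lemma integral_comp_pos_of_integral_sq_ne_zero {X : Type*} [MeasurableSpace X] {μ : Measure X}
    {F : ℝ → ℝ} {u : X → ℝ} (hF0 : F 0 = 0) (hF_pos : ∀ s, s ≠ 0 → 0 < F s)
    (hF_int : Integrable (fun x => F (u x)) μ) (hu : ∫ x, u x ^ 2 ∂μ ≠ 0) :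
    0 < ∫ x, F (u x) ∂μ := by
  have hF_nonneg : ∀ s, 0 ≤ F s := fun s => by
    rcases eq_or_ne s 0 with rfl | hs
    · exact hF0.ge
    · exact (hF_pos s hs).le
  refine (integral_nonneg fun x => hF_nonneg (u x)).lt_of_ne fun h => hu ?_
  have hFu : (fun x => F (u x)) =ᵐ[μ] 0 :=
    (integral_eq_zero_iff_of_nonneg (fun x => hF_nonneg (u x)) hF_int).1 h.symm
  refine integral_eq_zero_of_ae (hFu.mono fun x hx => ?_)
  by_contra hux
  exact (hF_pos (u x) (by simpa using hux)).ne' hx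

theorem stmt12_general (N : ℕ) (hN : 2 ≤ N) (a : ℝ) (ha : 0 < a) (f F : ℝ → ℝ)
    (hF0 : F 0 = 0)
    (α β : ℝ) (hαβ : α ≤ β) (hα : 2 + 4 / (N : ℝ) < α)
    (hineq : ∀ s : ℝ, s ≠ 0 →
      0 < α * F s ∧ α * F s ≤ f s * s ∧ f s * s ≤ β * F s)
    (u : EuclideanSpace ℝ (Fin N) → ℝ)
    (hgrad_int : Integrable (fun x => ‖fderiv ℝ u x‖ ^ 2) volume)
    (hF_int : Integrable (fun x => F (u x)) volume)
    (hfu_int : Integrable (fun x => f (u x) * u x) volume)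
    (hmass : ∫ x, (u x) ^ 2 ∂volume = a ^ 2)
    (hcon : ∫ x, ‖fderiv ℝ u x‖ ^ 2 ∂volume
      = (N : ℝ) / 2 * ∫ x, (f (u x) * u x - 2 * F (u x)) ∂volume) :
    (1 / (2 * β)) * (α - 2 - 4 / (N : ℝ)) * (∫ x, ‖fderiv ℝ u x‖ ^ 2 ∂volume)
      ≤ ∫ x, ((1 : ℝ) / 2 * ‖fderiv ℝ u x‖ ^ 2 - F (u x)) ∂volume ∧
    0 < ∫ x, ((1 : ℝ) / 2 * ‖fderiv ℝ u x‖ ^ 2 - F (u x)) ∂volume := by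
  have hn : (0 : ℝ) < N := by exact_mod_cast (by omega : 0 < N)
  have hα0 : 0 < α := by linarith [div_pos four_pos hn]
  have hbounds : ∀ s, α * F s ≤ f s * s ∧ f s * s ≤ β * F s := fun s => by
    rcases eq_or_ne s 0 with rfl | hs
    · simp [hF0]
    · exact (hineq s hs).2
  have hB : 0 < ∫ x, F (u x) := integral_comp_pos_of_integral_sq_ne_zero hF0
    (fun s hs => pos_of_mul_pos_right (hineq s hs).1 hα0.le) hF_int (by rw [hmass]; positivity)
  have hαA := integral_mono (hF_int.const_mul α) hfu_int fun x => (hbounds (u x)).1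
  have hAβ := integral_mono hfu_int (hF_int.const_mul β) fun x => (hbounds (u x)).2
  rw [integral_const_mul] at hαA hAβ
  rw [integral_sub hfu_int (hF_int.const_mul 2), integral_const_mul] at hcon
  rw [integral_sub (hgrad_int.const_mul (1 / 2)) hF_int, integral_const_mul]
  exact pohozaev_energy_bounds hn hα hαβ hcon hαA hAβ hB

/-- Coercivity and lower bound: on the constraint set `𝓜`, the energy satisfies
`I(u) ≥ (1/(2β))(α − 2 − 4/N) ∫|∇u|² > 0`. -/
theorem stmt12 (N : ℕ) (hN : 2 ≤ N) (a : ℝ) (ha : 0 < a) (f F : ℝ → ℝ)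
    (hf_cont : Continuous f) (hf_odd : ∀ s, f (-s) = -f s)
    (hF0 : F 0 = 0) (hF' : ∀ s : ℝ, HasDerivAt F (f s) s)
    (α β : ℝ) (hαβ : α ≤ β) (hα : 2 + 4 / (N : ℝ) < α)
    (hβ : N = 2 ∨ β < 2 * (N : ℝ) / ((N : ℝ) - 2))
    (hineq : ∀ s : ℝ, s ≠ 0 →
      0 < α * F s ∧ α * F s ≤ f s * s ∧ f s * s ≤ β * F s)
    (u : EuclideanSpace ℝ (Fin N) → ℝ)
    (hu_diff : Differentiable ℝ u)
    (huL2 : MemLp u 2 volume)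
    (hgrad_int : Integrable (fun x => ‖fderiv ℝ u x‖ ^ 2) volume)
    (hF_int : Integrable (fun x => F (u x)) volume)
    (hfu_int : Integrable (fun x => f (u x) * u x) volume)
    (hmass : ∫ x, (u x) ^ 2 ∂volume = a ^ 2)
    (hcon : ∫ x, ‖fderiv ℝ u x‖ ^ 2 ∂volume
      = (N : ℝ) / 2 * ∫ x, (f (u x) * u x - 2 * F (u x)) ∂volume) :
    (1 / (2 * β)) * (α - 2 - 4 / (N : ℝ)) * (∫ x, ‖fderiv ℝ u x‖ ^ 2 ∂volume)
      ≤ ∫ x, ((1 : ℝ) / 2 * ‖fderiv ℝ u x‖ ^ 2 - F (u x)) ∂volume ∧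
    0 < ∫ x, ((1 : ℝ) / 2 * ‖fderiv ℝ u x‖ ^ 2 - F (u x)) ∂volume :=
  stmt12_general N hN a ha f F hF0 α β hαβ hα hineq u hgrad_int hF_int hfu_int hmass hcon
end

section
/- Let N ≥ 2 and let f : ℝ → ℝ be continuous and odd with F(s) = ∫_0^s f(σ)dσ, satisfying: there exist 2 + 4/N < α ≤ β < 2* with 0 < α F(s) ≤ f(s)s ≤ β F(s) for s ≠ 0, and the map F̃(s) := f(s)s − 2F(s) is C^1 with F̃'(s)s > (2 + 4/N) F̃(s) for s ≠ 0. If u ∈ H^1(ℝ^N) with ∫u^2 = a^2 > 0 solves, for some ν ∈ ℝ, both −Δu − νu = (N/4) F̃'(u) (weakly) and the constraint ∫|∇u|^2 = (N/2)∫F̃(u), and additionally satisfies the Pohozaev identity ∫|∇u|^2 = (N^2/8)∫F̃'(u)u − (N^2/4)∫F̃(u), then a contradiction follows; i.e., no such u exists. -/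
open MeasureTheory Real Filter

noncomputable section

/-- Non-degeneracy step for the manifold `𝓜`: no `u ∈ S_a` can simultaneously solve
`−Δu − νu = (N/4) F̃'(u)` weakly, lie on the constraint `∫|∇u|² = (N/2)∫F̃(u)`, and
satisfy the corresponding Pohozaev identity. -/
theorem stmt14 (N : ℕ) (hN : 2 ≤ N) (a : ℝ) (ha : 0 < a)
    (f F Ft Ft' : ℝ → ℝ) (α β ν : ℝ)
    (hf_cont : Continuous f) (hf_odd : ∀ s, f (-s) = -f s)
    (hF0 : F 0 = 0) (hF' : ∀ s : ℝ, HasDerivAt F (f s) s)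
    (hαβ : α ≤ β) (hα : 2 + 4 / (N : ℝ) < α)
    (hβ : N = 2 ∨ β < 2 * (N : ℝ) / ((N : ℝ) - 2))
    (hineq : ∀ s : ℝ, s ≠ 0 →
      0 < α * F s ∧ α * F s ≤ f s * s ∧ f s * s ≤ β * F s)
    (hFt : ∀ s : ℝ, Ft s = f s * s - 2 * F s)
    (hFt'_cont : Continuous Ft') (hFt' : ∀ s : ℝ, HasDerivAt Ft (Ft' s) s)
    (hFt_ineq : ∀ s : ℝ, s ≠ 0 → (2 + 4 / (N : ℝ)) * Ft s < Ft' s * s)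
    (u : EuclideanSpace ℝ (Fin N) → ℝ)
    (hu_diff : Differentiable ℝ u)
    (huL2 : MemLp u 2 volume)
    (hgrad_int : Integrable (fun x => ‖fderiv ℝ u x‖ ^ 2) volume)
    (hFt_int : Integrable (fun x => Ft (u x)) volume)
    (hFt'_int : Integrable (fun x => Ft' (u x) * u x) volume)
    (hmass : ∫ x, (u x) ^ 2 ∂volume = a ^ 2)
    (hweak : ∀ φ : EuclideanSpace ℝ (Fin N) → ℝ, ContDiff ℝ (⊤ : ℕ∞) φ → HasCompactSupport φ →
      (∫ x, (inner ℝ (gradient u x) (gradient φ x) : ℝ) ∂volume)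
          - ν * ∫ x, u x * φ x ∂volume
        = (N : ℝ) / 4 * ∫ x, Ft' (u x) * φ x ∂volume)
    (hcon : ∫ x, ‖fderiv ℝ u x‖ ^ 2 ∂volume = (N : ℝ) / 2 * ∫ x, Ft (u x) ∂volume)
    (hPoh : ∫ x, ‖fderiv ℝ u x‖ ^ 2 ∂volume
      = (N : ℝ) ^ 2 / 8 * (∫ x, Ft' (u x) * u x ∂volume)
        - (N : ℝ) ^ 2 / 4 * ∫ x, Ft (u x) ∂volume) :
    False := by
  have hNpos : (0:ℝ) < N := by positivity
  set c : ℝ := 2 + 4 / (N : ℝ) with hc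
  set A := ∫ x, Ft (u x) ∂volume with hA
  set B := ∫ x, Ft' (u x) * u x ∂volume with hB
  -- From constraint + Pohozaev: B = c * A
  have hBA : B = c * A := by
    have h1 : (N : ℝ) / 2 * A = (N : ℝ) ^ 2 / 8 * B - (N : ℝ) ^ 2 / 4 * A := by
      rw [← hcon, hPoh]
    have hN2 : (N : ℝ) ≠ 0 := ne_of_gt hNpos
    field_simp [hc] at h1 ⊢
    rw [hc]; field_simp
    nlinarith [sq_nonneg (N:ℝ)]
  -- Ft 0 = 0
  have hFt0 : Ft 0 = 0 := by rw [hFt]; simp [hF0]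
  -- the nonnegative integrand
  set g : EuclideanSpace ℝ (Fin N) → ℝ := fun x => Ft' (u x) * u x - c * Ft (u x) with hg
  have hg_nonneg : ∀ x, 0 ≤ g x := by
    intro x
    by_cases hx : u x = 0
    · simp [hg, hx, hFt0]
    · have := hFt_ineq (u x) hx
      simp only [hg]
      linarith
  have hg_int : Integrable g volume := hFt'_int.sub (hFt_int.const_mul c)
  have hg_zero : ∫ x, g x ∂volume = 0 := by
    have : ∫ x, g x ∂volume = B - c * A := by
      rw [hg]
      rw [integral_sub hFt'_int (hFt_int.const_mul c), MeasureTheory.integral_const_mul]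
    rw [this, hBA]; ring
  have hg_ae : g =ᵐ[volume] 0 := by
    have := (integral_eq_zero_iff_of_nonneg hg_nonneg hg_int).mp hg_zero
    exact this
  have hu_ae : u =ᵐ[volume] 0 := by
    filter_upwards [hg_ae] with x hx
    by_contra hux
    have := hFt_ineq (u x) hux
    have hgx : g x = 0 := hx
    simp only [hg] at hgx
    exact absurd hgx (by linarith)
  have hsq : ∫ x, (u x) ^ 2 ∂volume = 0 := by
    have : (fun x => (u x) ^ 2) =ᵐ[volume] 0 := by
      filter_upwards [hu_ae] with x hx
      simp [hx]
    rw [integral_congr_ae this]; simp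
  rw [hmass] at hsq
  nlinarith
end
end

section
/- Let N ≥ 2 and f : ℝ → ℝ continuous and odd with F(s) = ∫_0^s f, satisfying: there exist 2 + 4/N < α ≤ β < 2* with 0 < αF(s) ≤ f(s)s ≤ βF(s) for s ≠ 0. For u ∈ H^1(ℝ^N) with u ≠ 0, define Ψ_u(s) = (e^{2s}/2)∫|∇u|² − e^{−Ns} ∫ F(e^{Ns/2} u). Then Ψ_u(s) → 0⁺ as s → −∞ and Ψ_u(s) → −∞ as s → +∞; in particular Ψ_u attains a positive maximum on ℝ. -/
/-!
The inequality `α F(r) ≤ f(r) r` says exactly that `τ ↦ e^{-ατ} F(e^τ c)` is nondecreasing, so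
`∫ F(e^{Ns/2} u)` is at most `e^{αNs/2} ∫ F(u)` for `s ≤ 0` and at least that for `s ≥ 0`.
After the factor `e^{-Ns}` the nonlinear term is thus squeezed against `e^{λs}` with
`λ = Nα/2 - N > 2` (this is `α > 2 + 4/N`), which loses against `e^{2s}` at `-∞` and wins at `+∞`.
The gradient term is positive because a differentiable function whose gradient vanishes a.e. is
a.e. invariant under every translation, hence a.e. constant, and no nonzero constant is in `L²(ℝᴺ)`.
The maximum exists by continuity, which is dominated convergence: the integrand is monotone in `s`.
-/

open MeasureTheory Real Filter Topology

section Rescaling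

variable {F f : ℝ → ℝ} {γ : ℝ}

theorem monotone_exp_neg_mul_comp_exp_mul (hF : ∀ s, HasDerivAt F (f s) s)
    (h : ∀ r, γ * F r ≤ f r * r) (c : ℝ) :
    Monotone fun τ => exp (-(γ * τ)) * F (exp τ * c) := by
  refine monotone_of_hasDerivAt_nonneg
    (f' := fun τ => exp (-(γ * τ)) * (f (exp τ * c) * (exp τ * c) - γ * F (exp τ * c)))
    (fun τ => ?_) (fun τ => mul_nonneg (exp_pos _).le (sub_nonneg.2 (h _)))
  have hexp : HasDerivAt (fun τ => exp (-(γ * τ))) (exp (-(γ * τ)) * -γ) τ := by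
    simpa using ((hasDerivAt_id τ).const_mul γ).neg.exp
  have hF_exp : HasDerivAt (fun τ => F (exp τ * c)) (f (exp τ * c) * (exp τ * c)) τ :=
    (hF _).comp τ ((hasDerivAt_exp τ).mul_const c)
  exact (hexp.mul hF_exp).congr_deriv (by ring)

theorem comp_exp_mul_le_of_nonpos (hF : ∀ s, HasDerivAt F (f s) s)
    (h : ∀ r, γ * F r ≤ f r * r) (c : ℝ) {τ : ℝ} (hτ : τ ≤ 0) :
    F (exp τ * c) ≤ exp (γ * τ) * F c := by
  have := monotone_exp_neg_mul_comp_exp_mul hF h c hτ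
  dsimp only at this
  rwa [mul_zero, neg_zero, exp_zero, one_mul, one_mul, exp_neg, inv_mul_le_iff₀ (exp_pos _)]
    at this

theorem exp_mul_mul_le_comp_exp_mul_of_nonneg (hF : ∀ s, HasDerivAt F (f s) s)
    (h : ∀ r, γ * F r ≤ f r * r) (c : ℝ) {τ : ℝ} (hτ : 0 ≤ τ) :
    exp (γ * τ) * F c ≤ F (exp τ * c) := by
  have := monotone_exp_neg_mul_comp_exp_mul hF h c hτ
  dsimp only at this
  rwa [mul_zero, neg_zero, exp_zero, one_mul, one_mul, exp_neg, le_inv_mul_iff₀ (exp_pos _)]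
    at this

theorem monotone_comp_exp_mul (hF : ∀ s, HasDerivAt F (f s) s) (h : ∀ r, 0 ≤ f r * r)
    (c : ℝ) : Monotone fun τ => F (exp τ * c) := by
  simpa using monotone_exp_neg_mul_comp_exp_mul (γ := 0) hF (by simpa using h) c

variable {X : Type*} [MeasurableSpace X] {μ : Measure X} {u : X → ℝ}

theorem exp_neg_mul_integral_comp_exp_mul_le (hF : ∀ s, HasDerivAt F (f s) s)
    (h : ∀ r, γ * F r ≤ f r * r) {N s : ℝ} (hN : 0 ≤ N) (hs : s ≤ 0)
    (hsint : Integrable (fun x => F (exp (N * s / 2) * u x)) μ)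
    (hint : Integrable (fun x => F (u x)) μ) :
    exp (-N * s) * ∫ x, F (exp (N * s / 2) * u x) ∂μ
      ≤ exp ((N * γ / 2 - N) * s) * ∫ x, F (u x) ∂μ := by
  calc _ ≤ exp (-N * s) * ∫ x, exp (γ * (N * s / 2)) * F (u x) ∂μ :=
        mul_le_mul_of_nonneg_left (integral_mono hsint (hint.const_mul _) fun x =>
          comp_exp_mul_le_of_nonpos hF h (u x) (by nlinarith)) (exp_pos _).le
    _ = _ := by rw [integral_const_mul, ← mul_assoc, ← exp_add]; ring_nf

theorem exp_mul_integral_le_exp_neg_mul_integral_comp_exp_mul (hF : ∀ s, HasDerivAt F (f s) s)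
    (h : ∀ r, γ * F r ≤ f r * r) {N s : ℝ} (hN : 0 ≤ N) (hs : 0 ≤ s)
    (hsint : Integrable (fun x => F (exp (N * s / 2) * u x)) μ)
    (hint : Integrable (fun x => F (u x)) μ) :
    exp ((N * γ / 2 - N) * s) * ∫ x, F (u x) ∂μ
      ≤ exp (-N * s) * ∫ x, F (exp (N * s / 2) * u x) ∂μ := by
  calc _ = exp (-N * s) * ∫ x, exp (γ * (N * s / 2)) * F (u x) ∂μ := by
        rw [integral_const_mul, ← mul_assoc, ← exp_add]; ring_nf
    _ ≤ _ := mul_le_mul_of_nonneg_left (integral_mono (hint.const_mul _) hsint fun x =>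
          exp_mul_mul_le_comp_exp_mul_of_nonneg hF h (u x) (by positivity)) (exp_pos _).le

theorem continuous_integral_of_monotone {g : ℝ → X → ℝ} (hg0 : ∀ s x, 0 ≤ g s x)
    (hmono : ∀ x, Monotone (g · x)) (hcont : ∀ x, Continuous (g · x))
    (hint : ∀ s, Integrable (g s) μ) :
    Continuous fun s => ∫ x, g s x ∂μ := by
  refine continuous_iff_continuousAt.2 fun s₀ => continuousAt_of_dominated (bound := g (s₀ + 1))
    (.of_forall fun s => (hint s).aestronglyMeasurable) ?_ (hint _)
    (ae_of_all _ fun x => (hcont x).continuousAt)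
  filter_upwards [eventually_lt_nhds (lt_add_one s₀)] with s hs
  exact ae_of_all _ fun x => by rw [norm_of_nonneg (hg0 s x)]; exact hmono x hs.le

theorem integral_comp_pos_of_integral_sq_pos (hF_nonneg : ∀ r, 0 ≤ F r)
    (hF_pos : ∀ r, r ≠ 0 → 0 < F r) (hint : Integrable (fun x => F (u x)) μ)
    (hu2 : Integrable (fun x => u x ^ 2) μ) (hu_ne : 0 < ∫ x, u x ^ 2 ∂μ) : 0 < ∫ x, F (u x) ∂μ := by
  rw [integral_pos_iff_support_of_nonneg (fun x => sq_nonneg _) hu2] at hu_ne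
  rw [integral_pos_iff_support_of_nonneg (fun x => hF_nonneg _) hint]
  exact hu_ne.trans_le (measure_mono fun x hx => (hF_pos _ (by simpa using hx)).ne')

end Rescaling

theorem eq_of_hasDerivAt_of_ae_eq_zero {g g' : ℝ → ℝ} (hg : ∀ t, HasDerivAt g (g' t) t)
    (h : g' =ᵐ[volume] 0) (a b : ℝ) : g a = g b := by
  have hFTC := intervalIntegral.integral_eq_sub_of_hasDerivAt (fun t _ => hg t)
    ((integrable_zero ℝ ℝ volume).congr h.symm).intervalIntegrable (a := a) (b := b)
  rw [intervalIntegral.integral_congr_ae (h.mono fun t ht _ => ht)] at hFTC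
  simp only [Pi.zero_apply, intervalIntegral.integral_zero] at hFTC
  linarith

section VanishingGradient

variable {E : Type*} [NormedAddCommGroup E] [NormedSpace ℝ E] [FiniteDimensional ℝ E]
  [MeasurableSpace E] [BorelSpace E] {μ : Measure E} [μ.IsAddHaarMeasure]

theorem ae_add_eq_of_ae_fderiv_eq_zero {u : E → ℝ} (hu : Differentiable ℝ u)
    (h : ∀ᵐ x ∂μ, fderiv ℝ u x = 0) (y : E) : ∀ᵐ x ∂μ, u (x + y) = u x := by
  have hline : ∀ᵐ x ∂μ, ∀ᵐ t : ℝ, fderiv ℝ u (x + t • y) = 0 := by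
    rw [Measure.ae_ae_comm]
    · exact ae_of_all _ fun t =>
        (measurePreserving_add_right μ (t • y)).quasiMeasurePreserving.ae h
    · exact (measurable_fderiv ℝ u).comp
        (measurable_fst.add (measurable_snd.smul measurable_const)) (measurableSet_singleton 0)
  filter_upwards [hline] with x hx
  have hderiv (t : ℝ) :
      HasDerivAt (fun t : ℝ => u (x + t • y)) (fderiv ℝ u (x + t • y) y) t := by
    have hline : HasDerivAt (fun t : ℝ => x + t • y) y t := by
      simpa using ((hasDerivAt_id t).smul_const y).const_add x
    exact (hu _).hasFDerivAt.comp_hasDerivAt t hline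
  simpa using eq_of_hasDerivAt_of_ae_eq_zero hderiv (hx.mono fun t ht => by simp [ht]) 1 0

theorem exists_ae_eq_const_of_forall_ae_add_eq {u : E → ℝ} (hu : Measurable u)
    (h : ∀ y, ∀ᵐ x ∂μ, u (x + y) = u x) : ∃ c, u =ᵐ[μ] fun _ => c := by
  have hpairs : ∀ᵐ x ∂μ, ∀ᵐ y ∂μ, u (x + y) = u x := by
    rw [Measure.ae_ae_comm]
    · exact ae_of_all _ h
    · exact measurableSet_eq_fun (hu.comp measurable_add) (hu.comp measurable_fst)
  obtain ⟨x₀, hx₀⟩ := hpairs.exists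
  refine ⟨u x₀, ?_⟩
  filter_upwards [(measurePreserving_add_left μ (-x₀)).quasiMeasurePreserving.ae hx₀] with x hx
  simpa using hx

theorem ae_eq_zero_of_ae_fderiv_eq_zero [Nontrivial E] {p : ENNReal} (hp0 : p ≠ 0) (hp : p ≠ ⊤)
    {u : E → ℝ} (hu : Differentiable ℝ u) (hLp : MemLp u p μ)
    (h : ∀ᵐ x ∂μ, fderiv ℝ u x = 0) : u =ᵐ[μ] 0 := by
  obtain ⟨c, hc⟩ := exists_ae_eq_const_of_forall_ae_add_eq hu.continuous.measurable
    (ae_add_eq_of_ae_fderiv_eq_zero hu h)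
  have hc0 : c = 0 := by
    simpa [memLp_const_iff hp0 hp, measure_univ_of_isAddLeftInvariant μ] using
      (memLp_congr_ae hc).1 hLp
  rwa [hc0] at hc

theorem integral_norm_fderiv_sq_pos [Nontrivial E] {u : E → ℝ} (hu : Differentiable ℝ u)
    (hu2 : Integrable (fun x => u x ^ 2) μ)
    (hgrad : Integrable (fun x => ‖fderiv ℝ u x‖ ^ 2) μ) (hu_ne : 0 < ∫ x, u x ^ 2 ∂μ) :
    0 < ∫ x, ‖fderiv ℝ u x‖ ^ 2 ∂μ := by
  refine (integral_nonneg fun x => by positivity).lt_of_ne' fun hD => hu_ne.ne' ?_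
  have hfd : ∀ᵐ x ∂μ, fderiv ℝ u x = 0 := by
    filter_upwards [(integral_eq_zero_iff_of_nonneg (fun x => by positivity) hgrad).1 hD]
      with x hx
    simpa using hx
  have hu0 := ae_eq_zero_of_ae_fderiv_eq_zero two_ne_zero ENNReal.ofNat_ne_top hu
    ((memLp_two_iff_integrable_sq hu.continuous.aestronglyMeasurable).2 hu2) hfd
  exact integral_eq_zero_of_ae (hu0.mono fun x hx => by simp [hx])

end VanishingGradient

theorem exists_forall_ge_of_tendsto_atBot_atTop {g : ℝ → ℝ} (hg : Continuous g) {l a : ℝ}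
    (hbot : Tendsto g atBot (𝓝 l)) (htop : Tendsto g atTop atBot) (ha : l < g a) :
    ∃ s₀, ∀ s, g s ≤ g s₀ :=
  hg.exists_forall_ge' a <| by
    rw [cocompact_eq_atBot_atTop, eventually_sup]
    exact ⟨(hbot.eventually (gt_mem_nhds ha)).mono fun _ => le_of_lt,
      htop.eventually (eventually_le_atBot _)⟩

section FiberMap

variable {H : ℝ → ℝ} {D C l : ℝ}

theorem tendsto_exp_mul_atBot {c : ℝ} (hc : 0 < c) :
    Tendsto (fun s => exp (c * s)) atBot (𝓝 0) :=
  tendsto_exp_atBot.comp (tendsto_id.const_mul_atBot hc)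

theorem exp_mul_mul_eq_exp_two_mul (l C s : ℝ) :
    exp (l * s) * C = exp (2 * s) * (exp ((l - 2) * s) * C) := by
  rw [← mul_assoc, ← exp_add]; ring_nf

theorem tendsto_fiber_atBot_nhds_zero (hH0 : ∀ s, 0 ≤ H s) (hl : 0 < l)
    (hH : ∀ s ≤ 0, H s ≤ exp (l * s) * C) :
    Tendsto (fun s => exp (2 * s) / 2 * D - H s) atBot (𝓝 0) := by
  have hquad : Tendsto (fun s => exp (2 * s) / 2 * D) atBot (𝓝 0) := by
    simpa using ((tendsto_exp_mul_atBot two_pos).div_const 2).mul_const D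
  have hH_lim : Tendsto H atBot (𝓝 0) :=
    tendsto_of_tendsto_of_tendsto_of_le_of_le' tendsto_const_nhds
      (by simpa using (tendsto_exp_mul_atBot hl).mul_const C) (.of_forall hH0)
      (by filter_upwards [eventually_le_atBot 0] with s hs using hH s hs)
  simpa using hquad.sub hH_lim

theorem eventually_fiber_pos_atBot (hD : 0 < D) (hl : 2 < l)
    (hH : ∀ s ≤ 0, H s ≤ exp (l * s) * C) :
    ∀ᶠ s in atBot, 0 < exp (2 * s) / 2 * D - H s := by
  have hsmall := ((tendsto_exp_mul_atBot (sub_pos.2 hl)).mul_const C).eventually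
    (gt_mem_nhds (a := D / 2) (by simpa using half_pos hD))
  filter_upwards [hsmall, eventually_le_atBot 0] with s hs hs0
  have := mul_lt_mul_of_pos_left (by simpa using hs) (exp_pos (2 * s))
  linarith [hH s hs0, exp_mul_mul_eq_exp_two_mul l C s]

theorem tendsto_fiber_atTop_atBot (hC : 0 < C) (hl : 2 < l)
    (hH : ∀ s, 0 ≤ s → exp (l * s) * C ≤ H s) :
    Tendsto (fun s => exp (2 * s) / 2 * D - H s) atTop atBot := by
  have hbig : Tendsto (fun s => exp ((l - 2) * s) * C) atTop atTop :=
    (tendsto_exp_atTop.comp (tendsto_id.const_mul_atTop (sub_pos.2 hl))).atTop_mul_const hC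
  refine tendsto_atBot_mono' _ ?_
    (tendsto_neg_atBot_iff.2 (tendsto_exp_atTop.comp (tendsto_id.const_mul_atTop two_pos)))
  filter_upwards [hbig.eventually_ge_atTop (D / 2 + 1), eventually_ge_atTop 0] with s hs hs0
  have := mul_le_mul_of_nonneg_left hs (exp_pos (2 * s)).le
  simp only [Function.comp_apply, id]
  linarith [hH s hs0, exp_mul_mul_eq_exp_two_mul l C s]

theorem fiber_map_asymptotics {Ψ : ℝ → ℝ} (hD : 0 < D) (hC : 0 < C) (hl : 2 < l)
    (hH0 : ∀ s, 0 ≤ H s) (hH : Continuous H) (hle : ∀ s ≤ 0, H s ≤ exp (l * s) * C)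
    (hge : ∀ s, 0 ≤ s → exp (l * s) * C ≤ H s) (hΨ : Ψ = fun s => exp (2 * s) / 2 * D - H s) :
    Tendsto Ψ atBot (𝓝 0) ∧ (∀ᶠ s in atBot, 0 < Ψ s) ∧ Tendsto Ψ atTop atBot ∧
      ∃ s₀, 0 < Ψ s₀ ∧ ∀ s, Ψ s ≤ Ψ s₀ := by
  subst hΨ
  have hbot := tendsto_fiber_atBot_nhds_zero (D := D) hH0 (by linarith) hle
  have htop := tendsto_fiber_atTop_atBot (D := D) hC hl hge
  have hpos := eventually_fiber_pos_atBot hD hl hle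
  obtain ⟨a, ha⟩ := hpos.exists
  obtain ⟨s₀, hs₀⟩ := exists_forall_ge_of_tendsto_atBot_atTop (by fun_prop) hbot htop ha
  exact ⟨hbot, hpos, htop, s₀, ha.trans_le (hs₀ a), hs₀⟩

end FiberMap

theorem stmt19_general (N : ℕ) (hN : 2 ≤ N) (f F : ℝ → ℝ)
    (hF0 : F 0 = 0) (hF' : ∀ s : ℝ, HasDerivAt F (f s) s)
    (α β : ℝ) (hα : 2 + 4 / (N : ℝ) < α)
    (hineq : ∀ s : ℝ, s ≠ 0 →
      0 < α * F s ∧ α * F s ≤ f s * s ∧ f s * s ≤ β * F s)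
    (u : EuclideanSpace ℝ (Fin N) → ℝ)
    (hu_diff : Differentiable ℝ u)
    (hu2int : Integrable (fun x => (u x) ^ 2) volume)
    (hgrad_int : Integrable (fun x => ‖fderiv ℝ u x‖ ^ 2) volume)
    (hF_int : ∀ s : ℝ, Integrable (fun x => F (Real.exp ((N : ℝ) * s / 2) * u x)) volume)
    (hu_ne : 0 < ∫ x, (u x) ^ 2 ∂volume)
    (Ψ : ℝ → ℝ)
    (hΨ : Ψ = fun s => Real.exp (2 * s) / 2 * (∫ x, ‖fderiv ℝ u x‖ ^ 2 ∂volume)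
      - Real.exp (-(N : ℝ) * s) * ∫ x, F (Real.exp ((N : ℝ) * s / 2) * u x) ∂volume) :
    Tendsto Ψ atBot (nhds 0) ∧ (∀ᶠ s in atBot, 0 < Ψ s) ∧
    Tendsto Ψ atTop atBot ∧
    ∃ s0 : ℝ, 0 < Ψ s0 ∧ ∀ s : ℝ, Ψ s ≤ Ψ s0 := by
  have : NeZero N := ⟨by omega⟩
  have hN0 : (0 : ℝ) < N := by positivity
  have hα0 : 0 < α := lt_trans (by positivity) hα
  have hF_pos (r : ℝ) (hr : r ≠ 0) : 0 < F r := pos_of_mul_pos_right (hineq r hr).1 hα0.le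
  have hF_nonneg (r : ℝ) : 0 ≤ F r := by
    rcases eq_or_ne r 0 with rfl | hr
    exacts [hF0.ge, (hF_pos r hr).le]
  have hAR (r : ℝ) : α * F r ≤ f r * r := by
    rcases eq_or_ne r 0 with rfl | hr
    exacts [by simp [hF0], (hineq r hr).2.1]
  have hint0 : Integrable (fun x => F (u x)) volume := by simpa using hF_int 0
  have hl : 2 < N * α / 2 - N := by
    have := (div_lt_iff₀' hN0).1 (lt_sub_iff_add_lt'.2 hα)
    nlinarith
  have hG : Continuous fun s => ∫ x, F (exp (N * s / 2) * u x) := by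
    have hF_mono := monotone_comp_exp_mul hF' fun r =>
      (mul_nonneg hα0.le (hF_nonneg r)).trans (hAR r)
    have hFc : Continuous F := continuous_iff_continuousAt.2 fun s => (hF' s).continuousAt
    exact continuous_integral_of_monotone (fun _ _ => hF_nonneg _)
      (fun x => (hF_mono (u x)).comp fun a b hab => by gcongr) (fun x => by fun_prop) hF_int
  exact fiber_map_asymptotics (integral_norm_fderiv_sq_pos hu_diff hu2int hgrad_int hu_ne)
    (integral_comp_pos_of_integral_sq_pos hF_nonneg hF_pos hint0 hu2int hu_ne) hl
    (fun s => mul_nonneg (exp_pos _).le (integral_nonneg fun x => hF_nonneg _)) (by fun_prop)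
    (fun s hs => exp_neg_mul_integral_comp_exp_mul_le hF' hAR hN0.le hs (hF_int s) hint0)
    (fun s hs => exp_mul_integral_le_exp_neg_mul_integral_comp_exp_mul hF' hAR hN0.le hs
      (hF_int s) hint0) hΨ

/-- Asymptotic behaviour of the fiber map
`Ψ_u(s) = (e^{2s}/2)∫|∇u|² − e^{−Ns}∫F(e^{Ns/2}u)`:
it tends to `0⁺` as `s → −∞`, to `−∞` as `s → +∞`, and attains a positive maximum. -/
theorem stmt19 (N : ℕ) (hN : 2 ≤ N) (f F : ℝ → ℝ)
    (hf_cont : Continuous f) (hf_odd : ∀ s, f (-s) = -f s)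
    (hF0 : F 0 = 0) (hF' : ∀ s : ℝ, HasDerivAt F (f s) s)
    (α β : ℝ) (hαβ : α ≤ β) (hα : 2 + 4 / (N : ℝ) < α)
    (hβ : N = 2 ∨ β < 2 * (N : ℝ) / ((N : ℝ) - 2))
    (hineq : ∀ s : ℝ, s ≠ 0 →
      0 < α * F s ∧ α * F s ≤ f s * s ∧ f s * s ≤ β * F s)
    (u : EuclideanSpace ℝ (Fin N) → ℝ)
    (hu_diff : Differentiable ℝ u)
    (hu2int : Integrable (fun x => (u x) ^ 2) volume)
    (hgrad_int : Integrable (fun x => ‖fderiv ℝ u x‖ ^ 2) volume)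
    (hF_int : ∀ s : ℝ, Integrable (fun x => F (Real.exp ((N : ℝ) * s / 2) * u x)) volume)
    (hu_ne : 0 < ∫ x, (u x) ^ 2 ∂volume)
    (Ψ : ℝ → ℝ)
    (hΨ : Ψ = fun s => Real.exp (2 * s) / 2 * (∫ x, ‖fderiv ℝ u x‖ ^ 2 ∂volume)
      - Real.exp (-(N : ℝ) * s) * ∫ x, F (Real.exp ((N : ℝ) * s / 2) * u x) ∂volume) :
    Tendsto Ψ atBot (nhds 0) ∧ (∀ᶠ s in atBot, 0 < Ψ s) ∧
    Tendsto Ψ atTop atBot ∧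
    ∃ s0 : ℝ, 0 < Ψ s0 ∧ ∀ s : ℝ, Ψ s ≤ Ψ s0 :=
  stmt19_general N hN f F hF0 hF' α β hα hineq u hu_diff hu2int hgrad_int hF_int hu_ne Ψ hΨ
end
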